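/- Minimal implicational natural deduction is incomplete with respect to minimal propositional logic under the standard ⊥-translation of conjunction: for distinct propositional variables p and q, the formula (p ∧ q) → p is a theorem of Prawitz's natural deduction system for minimal propositional logic, yet its implicational translation ((p → (q → ⊥)) → ⊥) → p (obtained by expressing p ∧ q as (p → (q → ⊥)) → ⊥) is not a theorem of minimal implicational natural deduction. -/

import Mathlib

/-- Formulas of minimal implicational logic: propositional variables,
the atomic constant ⊥ (no inference rules), and implication. -/
inductive IForm : Type
  | var : ℕ → IForm
  | bot : IForm
  | imp : IForm → IForm → IForm
deriving DecidableEq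

/-- Minimal implicational natural deduction. -/
inductive IDeriv : Set IForm → IForm → Prop
  | ax {Γ : Set IForm} {φ : IForm} : φ ∈ Γ → IDeriv Γ φ
  | impI {Γ : Set IForm} {α β : IForm} :
      IDeriv (insert α Γ) β → IDeriv Γ (IForm.imp α β)
  | impE {Γ : Set IForm} {α β : IForm} :
      IDeriv Γ α → IDeriv Γ (IForm.imp α β) → IDeriv Γ β

/-- Boolean evaluation of an implicational formula under a valuation `v` of
the propositional variables and a Boolean value `b` for the atom ⊥. -/
def IForm.eval (v : ℕ → Bool) (b : Bool) : IForm → Bool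
  | IForm.var n => v n
  | IForm.bot => b
  | IForm.imp α β => !(α.eval v b) || (β.eval v b)

/-- Formulas of minimal propositional logic. -/
inductive PForm : Type
  | var : ℕ → PForm
  | bot : PForm
  | conj : PForm → PForm → PForm
  | disj : PForm → PForm → PForm
  | imp : PForm → PForm → PForm
deriving DecidableEq

/-- Prawitz's natural deduction system for minimal propositional logic. -/
inductive PDeriv : Set PForm → PForm → Prop
  | ax {Γ : Set PForm} {φ : PForm} : φ ∈ Γ → PDeriv Γ φ
  | impI {Γ : Set PForm} {α β : PForm} :
      PDeriv (insert α Γ) β → PDeriv Γ (PForm.imp α β)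
  | impE {Γ : Set PForm} {α β : PForm} :
      PDeriv Γ α → PDeriv Γ (PForm.imp α β) → PDeriv Γ β
  | andI {Γ : Set PForm} {α β : PForm} :
      PDeriv Γ α → PDeriv Γ β → PDeriv Γ (PForm.conj α β)
  | andE₁ {Γ : Set PForm} {α β : PForm} :
      PDeriv Γ (PForm.conj α β) → PDeriv Γ α
  | andE₂ {Γ : Set PForm} {α β : PForm} :
      PDeriv Γ (PForm.conj α β) → PDeriv Γ β
  | orI₁ {Γ : Set PForm} {α β : PForm} :
      PDeriv Γ α → PDeriv Γ (PForm.disj α β)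
  | orI₂ {Γ : Set PForm} {α β : PForm} :
      PDeriv Γ β → PDeriv Γ (PForm.disj α β)
  | orE {Γ : Set PForm} {α β γ : PForm} :
      PDeriv Γ (PForm.disj α β) → PDeriv (insert α Γ) γ →
      PDeriv (insert β Γ) γ → PDeriv Γ γ

/-!
Since ⊥ is an ordinary atom in minimal logic, implicational derivations are sound for two-valued
semantics in which ⊥ may be interpreted as *true*. Under that reading the translated conjunction
`(p → (q → ⊥)) → ⊥` holds whatever `p` and `q` are, so making `p` false refutes the translation
of `(p ∧ q) → p`.
-/

@[simp]
theorem IForm.eval_imp_eq_true {v : ℕ → Bool} {b : Bool} {α β : IForm} :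
    (α.imp β).eval v b = true ↔ (α.eval v b = true → β.eval v b = true) := by
  simp only [IForm.eval]
  cases α.eval v b <;> simp

theorem IDeriv.eval_eq_true {Γ : Set IForm} {φ : IForm} (h : IDeriv Γ φ) {v : ℕ → Bool}
    {b : Bool} (hΓ : ∀ ψ ∈ Γ, ψ.eval v b = true) : φ.eval v b = true := by
  induction h with
  | ax hφ => exact hΓ _ hφ
  | impI _ ih =>
    exact IForm.eval_imp_eq_true.mpr fun hα =>
      ih fun ψ hψ => (Set.mem_insert_iff.mp hψ).elim (· ▸ hα) (hΓ ψ)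
  | impE _ _ ihα ihimp => exact IForm.eval_imp_eq_true.mp (ihimp hΓ) (ihα hΓ)

theorem PDeriv.conj_imp_left (Γ : Set PForm) (α β : PForm) :
    PDeriv Γ ((α.conj β).imp α) :=
  .impI (.andE₁ (.ax (Set.mem_insert _ _)))

theorem implicational_incomplete_general (p q : ℕ) :
    PDeriv ∅ (PForm.imp (PForm.conj (PForm.var p) (PForm.var q)) (PForm.var p))
    ∧ ¬ IDeriv ∅
        (IForm.imp
          (IForm.imp (IForm.imp (IForm.var p) (IForm.imp (IForm.var q) IForm.bot))
            IForm.bot)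
          (IForm.var p)) := by
  refine ⟨PDeriv.conj_imp_left _ _ _, fun h => ?_⟩
  have hsound := h.eval_eq_true (v := fun _ => false) (b := true) (by simp)
  simp [IForm.eval] at hsound

/-- (p ∧ q) → p is a theorem of minimal propositional logic,
yet its ⊥-translation ((p → (q → ⊥)) → ⊥) → p is not a theorem of minimal
implicational natural deduction, for distinct variables p and q. -/
theorem implicational_incomplete (p q : ℕ) (hpq : p ≠ q) :
    PDeriv ∅ (PForm.imp (PForm.conj (PForm.var p) (PForm.var q)) (PForm.var p))
    ∧ ¬ IDeriv ∅
        (IForm.imp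
          (IForm.imp (IForm.imp (IForm.var p) (IForm.imp (IForm.var q) IForm.bot))
            IForm.bot)
          (IForm.var p)) :=
  implicational_incomplete_general p q
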